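/- For m ≥ 1, r ≥ 0 and n ≥ k ≥ 0, the degenerate Whitney number satisfies W_{m,r}(n,k|λ) = (1/(k! m^k)) ∑_{j=0}^n λ^{n-j} S_1(n,j) m^j Δ^k (r/m)^j, where Δ^k (r/m)^j = ∑_{l=0}^k C(k,l)(-1)^{k-l}(l + r/m)^j and S_1(n,j) is the signed Stirling number of the first kind. -/

import Mathlib

/-! The product `y(y-λ)⋯(y-(n-1)λ)` is the homogenized falling factorial, so it expands as
`∑ⱼ λ^(n-j) S₁(n,j) yʲ`. Substituting `y = ml + r = m(l + r/m)` into each λ-binomial coefficient of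
`W_{m,r}(n,k|λ)` and exchanging the sums over `l` and `j` gives the formula. -/

open Finset

/-- Signed Stirling numbers of the first kind: `(x)_n = ∑_m S_1(n,m) x^m`. -/
def S1 : ℕ → ℕ → ℤ
  | 0, 0 => 1
  | 0, _ + 1 => 0
  | n + 1, 0 => -(n : ℤ) * S1 n 0
  | n + 1, k + 1 => S1 n k - (n : ℤ) * S1 n (k + 1)

/-- The λ-binomial coefficient `binom_λ(y,n) = y(y-λ)⋯(y-(n-1)λ)/n!`. -/
noncomputable def dbinom (lam y : ℝ) (n : ℕ) : ℝ :=
  (∏ i ∈ range n, (y - i * lam)) / n.factorial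

/-- Degenerate Whitney numbers:
`W_{m,r}(n,k|λ) = (n!/(k! m^k)) ∑_{l=0}^k C(k,l)(-1)^{k-l} binom_λ(ml+r,n)`. -/
noncomputable def whitneyDeg (lam : ℝ) (m r n k : ℕ) : ℝ :=
  (n.factorial : ℝ) / ((k.factorial : ℝ) * (m : ℝ) ^ k) *
    ∑ l ∈ range (k + 1), (k.choose l : ℝ) * (-1) ^ (k - l) * dbinom lam (m * l + r) n

theorem S1_eq_zero_of_lt : ∀ {n j : ℕ}, n < j → S1 n j = 0
  | 0, _ + 1, _ => rfl
  | n + 1, j + 1, h => by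
    rw [S1, S1_eq_zero_of_lt (by omega : n < j), S1_eq_zero_of_lt (by omega : n < j + 1)]
    ring

theorem prod_sub_mul_eq_sum_S1 {R : Type*} [CommRing R] (lam y : R) (n : ℕ) :
    ∏ i ∈ range n, (y - i * lam) = ∑ j ∈ range (n + 1), lam ^ (n - j) * S1 n j * y ^ j := by
  induction n with
  | zero => simp [S1]
  | succ n ih =>
    have hshift : lam * ∑ j ∈ range (n + 1), lam ^ (n - j) * S1 n j * y ^ j
        = ∑ j ∈ range (n + 1), lam ^ (n - j) * S1 n (j + 1) * y ^ (j + 1)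
          + lam ^ (n + 1) * S1 n 0 := by
      rw [mul_sum, sum_range_succ', sum_range_succ _ n, S1_eq_zero_of_lt n.lt_succ_self]
      congr 1
      · rw [Int.cast_zero, mul_zero, zero_mul, add_zero]
        refine sum_congr rfl fun j hj => ?_
        rw [show n - j = n - (j + 1) + 1 by simp at hj; omega, pow_succ']
        ring
      · rw [Nat.sub_zero, pow_succ']
        ring
    rw [prod_range_succ, ih, sum_range_succ' _ (n + 1)]
    have hsplit : ∑ j ∈ range (n + 1), lam ^ (n + 1 - (j + 1)) * S1 (n + 1) (j + 1) * y ^ (j + 1)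
        = (∑ j ∈ range (n + 1), lam ^ (n - j) * S1 n j * y ^ j) * y
          - n * ∑ j ∈ range (n + 1), lam ^ (n - j) * S1 n (j + 1) * y ^ (j + 1) := by
      rw [sum_mul, mul_sum, ← sum_sub_distrib]
      refine sum_congr rfl fun j _ => ?_
      simp only [S1, Nat.add_sub_add_right, Int.cast_sub, Int.cast_mul, Int.cast_natCast]
      ring
    rw [hsplit]
    simp only [S1, Nat.sub_zero, Int.cast_mul, Int.cast_neg, Int.cast_natCast]
    linear_combination (-(n : R)) * hshift

theorem whitneyDeg_eq_sum_prod (lam : ℝ) (m r n k : ℕ) :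
    whitneyDeg lam m r n k =
      1 / ((k.factorial : ℝ) * (m : ℝ) ^ k) *
        ∑ l ∈ range (k + 1), (k.choose l : ℝ) * (-1) ^ (k - l) *
          ∏ i ∈ range n, ((m : ℝ) * l + r - i * lam) := by
  rw [whitneyDeg, mul_sum, mul_sum]
  refine sum_congr rfl fun l _ => ?_
  rw [dbinom]
  generalize ∏ i ∈ range n, ((m : ℝ) * l + r - i * lam) = P
  field_simp

theorem stmt14_general (lam : ℝ) (m r n k : ℕ) (hm : 1 ≤ m) :
    whitneyDeg lam m r n k =
      (1 / ((k.factorial : ℝ) * (m : ℝ) ^ k)) *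
        ∑ j ∈ range (n + 1),
          lam ^ (n - j) * (S1 n j : ℝ) * (m : ℝ) ^ j *
            ∑ l ∈ range (k + 1),
              (k.choose l : ℝ) * (-1) ^ (k - l) * ((l : ℝ) + (r : ℝ) / (m : ℝ)) ^ j := by
  have hm0 : (m : ℝ) ≠ 0 := by positivity
  rw [whitneyDeg_eq_sum_prod]
  congr 1
  simp_rw [prod_sub_mul_eq_sum_S1, mul_sum]
  rw [sum_comm]
  refine sum_congr rfl fun j _ => sum_congr rfl fun l _ => ?_
  rw [show (m : ℝ) * l + r = m * (l + r / m) by field_simp, mul_pow]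
  ring

/-- For `m ≥ 1`, `r ≥ 0` and `n ≥ k`:
`W_{m,r}(n,k|λ) = (1/(k! m^k)) ∑_{j=0}^n λ^{n-j} S_1(n,j) m^j Δ^k (r/m)^j`, where
`Δ^k (r/m)^j = ∑_{l=0}^k C(k,l)(-1)^{k-l}(l + r/m)^j`. -/
theorem stmt14 (lam : ℝ) (m r n k : ℕ) (hm : 1 ≤ m) (hkn : k ≤ n) :
    whitneyDeg lam m r n k =
      (1 / ((k.factorial : ℝ) * (m : ℝ) ^ k)) *
        ∑ j ∈ range (n + 1),
          lam ^ (n - j) * (S1 n j : ℝ) * (m : ℝ) ^ j *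
            ∑ l ∈ range (k + 1),
              (k.choose l : ℝ) * (-1) ^ (k - l) * ((l : ℝ) + (r : ℝ) / (m : ℝ)) ^ j :=
  stmt14_general lam m r n k hm
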